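/- Let P be a Lagrangian plane in ℝ⁴ and let π_P denote orthogonal projection onto P. Denote by X₁, Y₁, X₂, Y₂ the standard basis vectors corresponding to coordinates x₁, y₁, x₂, y₂. Then ⟨π_P X₁, π_P Y₂⟩ = ⟨π_P Y₁, π_P X₂⟩. -/

import Mathlib

/-!
The complex structure `J` is skew-adjoint with `J² = -1`, and for a Lagrangian plane `P` it swaps
`P` and `Pᗮ` (isotropy gives `J P ≤ Pᗮ`, and the dimensions agree). Hence `π_P ∘ J = J ∘ π_{Pᗮ}`,
which gives `⟪π (J x), π y⟫ = ⟪J x, y⟫ + ⟪π x, π (J y)⟫` for all `x, y`. With `x = X₁`, `y = X₂`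
the middle term is `⟪Y₁, X₂⟫ = 0`.
-/

/-- The standard symplectic form `ω = dx₁∧dy₁ + dx₂∧dy₂` on `ℝ⁴`, coordinates ordered
as `(x₁, y₁, x₂, y₂)`. -/
def omega4 (u v : EuclideanSpace ℝ (Fin 4)) : ℝ :=
  u 0 * v 1 - u 1 * v 0 + u 2 * v 3 - u 3 * v 2

open Module Submodule RealInnerProductSpace

section

variable {E : Type*} [NormedAddCommGroup E] [InnerProductSpace ℝ E] {J : E →ₗ[ℝ] E}
  {K : Submodule ℝ E}

theorem Submodule.starProjection_apply_eq_apply_starProjection_orthogonal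
    [K.HasOrthogonalProjection] (hK : K.map J ≤ Kᗮ) (hKperp : Kᗮ.map J ≤ K) (z : E) :
    K.starProjection (J z) = J (Kᗮ.starProjection z) := by
  refine eq_starProjection_of_mem_orthogonal
    (hKperp (mem_map_of_mem (Kᗮ.starProjection_apply_mem z))) ?_
  rw [starProjection_orthogonal_val, map_sub, sub_sub_cancel]
  exact hK (mem_map_of_mem (K.starProjection_apply_mem z))

theorem Submodule.inner_starProjection_apply_left_eq_inner_add [K.HasOrthogonalProjection]
    (hskew : ∀ u v, ⟪J u, v⟫ = -⟪u, J v⟫) (hK : K.map J ≤ Kᗮ) (hKperp : Kᗮ.map J ≤ K)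
    (x y : E) :
    ⟪K.starProjection (J x), K.starProjection y⟫ =
      ⟪J x, y⟫ + ⟪K.starProjection x, K.starProjection (J y)⟫ := by
  have hproj : ∀ a b, ⟪K.starProjection a, K.starProjection b⟫ = ⟪K.starProjection a, b⟫ :=
    fun a b ↦ by
      rw [← inner_starProjection_left_eq_right,
        starProjection_eq_self_iff.2 (K.starProjection_apply_mem a)]
  rw [hproj, starProjection_apply_eq_apply_starProjection_orthogonal hK hKperp,
    starProjection_orthogonal_val, map_sub, inner_sub_left, hskew (K.starProjection x), hproj]
  ring

theorem Submodule.map_eq_orthogonal_of_isotropic [FiniteDimensional ℝ E]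
    (hJJ : ∀ u, J (J u) = -u) (hdim : 2 * finrank ℝ K = finrank ℝ E)
    (hiso : ∀ u ∈ K, ∀ v ∈ K, ⟪J u, v⟫ = 0) : K.map J = Kᗮ := by
  have hinj : Function.Injective J := fun u v h ↦ by
    simpa [hJJ] using congrArg J h
  refine eq_of_le_of_finrank_eq ?_ ?_
  · rintro _ ⟨u, hu, rfl⟩
    exact (mem_orthogonal' _ _).2 (hiso u hu)
  · rw [← (equivMapOfInjective J hinj K).finrank_eq]
    have := finrank_add_finrank_orthogonal K
    omega

theorem Submodule.map_orthogonal_eq_of_map_eq (hJJ : ∀ u, J (J u) = -u) (hK : K.map J = Kᗮ) :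
    Kᗮ.map J = K := by
  have hJJ' : J ∘ₗ J = -LinearMap.id := LinearMap.ext hJJ
  rw [← hK, ← map_comp, hJJ', Submodule.map_neg, map_id]

end

noncomputable def complexStructure4 : EuclideanSpace ℝ (Fin 4) →ₗ[ℝ] EuclideanSpace ℝ (Fin 4) where
  toFun u := !₂[-u 1, u 0, -u 3, u 2]
  map_add' u v := by ext i; fin_cases i <;> simp <;> ring
  map_smul' c u := by ext i; fin_cases i <;> simp

theorem complexStructure4_complexStructure4 (u : EuclideanSpace ℝ (Fin 4)) :
    complexStructure4 (complexStructure4 u) = -u := by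
  ext i; fin_cases i <;> simp [complexStructure4]

theorem inner_complexStructure4_left (u v : EuclideanSpace ℝ (Fin 4)) :
    ⟪complexStructure4 u, v⟫ = omega4 u v := by
  simp [complexStructure4, omega4, PiLp.inner_apply, Fin.sum_univ_four]
  ring

theorem inner_complexStructure4_left_eq_neg_right (u v : EuclideanSpace ℝ (Fin 4)) :
    ⟪complexStructure4 u, v⟫ = -⟪u, complexStructure4 v⟫ := by
  rw [inner_complexStructure4_left, real_inner_comm, inner_complexStructure4_left, omega4, omega4]
  ring

theorem complexStructure4_single_zero :
    complexStructure4 (EuclideanSpace.single 0 1) = EuclideanSpace.single 1 (1 : ℝ) := by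
  ext j; fin_cases j <;> simp [complexStructure4]

theorem complexStructure4_single_two :
    complexStructure4 (EuclideanSpace.single 2 1) = EuclideanSpace.single 3 (1 : ℝ) := by
  ext j; fin_cases j <;> simp [complexStructure4]

/-- For a Lagrangian plane `P ⊆ ℝ⁴` and the orthogonal projection `π_P` onto `P`, with
standard basis vectors `X₁, Y₁, X₂, Y₂` (coordinates `x₁, y₁, x₂, y₂`), one has
`⟨π_P X₁, π_P Y₂⟩ = ⟨π_P Y₁, π_P X₂⟩`. -/
theorem stmt12 (P : Submodule ℝ (EuclideanSpace ℝ (Fin 4)))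
    (hdim : Module.finrank ℝ P = 2)
    (hLag : ∀ u ∈ P, ∀ v ∈ P, omega4 u v = 0) :
    @inner ℝ _ _
        ((Submodule.orthogonalProjectionOnto P (EuclideanSpace.single 0 (1 : ℝ)) : EuclideanSpace ℝ (Fin 4)))
        ((Submodule.orthogonalProjectionOnto P (EuclideanSpace.single 3 (1 : ℝ)) : EuclideanSpace ℝ (Fin 4)))
      = @inner ℝ _ _
        ((Submodule.orthogonalProjectionOnto P (EuclideanSpace.single 1 (1 : ℝ)) : EuclideanSpace ℝ (Fin 4)))
        ((Submodule.orthogonalProjectionOnto P (EuclideanSpace.single 2 (1 : ℝ)) : EuclideanSpace ℝ (Fin 4))) := by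
  have hmap : P.map complexStructure4 = Pᗮ := by
    refine map_eq_orthogonal_of_isotropic complexStructure4_complexStructure4 ?_ ?_
    · rw [hdim, finrank_euclideanSpace_fin]
    · intro u hu v hv
      rw [inner_complexStructure4_left, hLag u hu v hv]
  have hmap' := map_orthogonal_eq_of_map_eq complexStructure4_complexStructure4 hmap
  have key := inner_starProjection_apply_left_eq_inner_add inner_complexStructure4_left_eq_neg_right
    hmap.le hmap'.le (EuclideanSpace.single 0 1) (EuclideanSpace.single 2 1)
  simp only [complexStructure4_single_zero, complexStructure4_single_two,
    EuclideanSpace.inner_single_left] at key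
  simpa using key.symm
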